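/- Rippa's LOOCV identity: let A ∈ ℝ^{n×n} be invertible, g ∈ ℝⁿ, α = A⁻¹g, and for each j let α^{(j)} solve the system obtained by deleting the j-th row and j-th column from A with right-hand side g with the j-th entry deleted. Then the leave-one-out residual g_j − Σ_{i≠j} A_{j,i} α^{(j)}_i equals α_j / (A⁻¹)_{jj}, provided (A⁻¹)_{jj} ≠ 0. -/
import Mathlib


/-- Rippa's LOOCV identity for square invertible collocation systems. -/
theorem rippa_loocv_identity (n : ℕ)
    (A : Matrix (Fin (n + 1)) (Fin (n + 1)) ℝ) (hA : IsUnit A.det)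
    (g : Fin (n + 1) → ℝ) (j : Fin (n + 1))
    (hdiag : A⁻¹ j j ≠ 0)
    -- α = A⁻¹ g
    (α : Fin (n + 1) → ℝ) (hα : α = A⁻¹.mulVec g)
    -- α^{(j)} solves the system with the j-th row and column deleted
    (αj : Fin n → ℝ)
    (hαj : (A.submatrix j.succAbove j.succAbove).mulVec αj = fun i => g (j.succAbove i)) :
    g j - ∑ i : Fin n, A j (j.succAbove i) * αj i = α j / A⁻¹ j j := by
  set r := g j - ∑ i : Fin n, A j (j.succAbove i) * αj i with hr
  set x : Fin (n + 1) → ℝ := j.insertNth 0 αj with hx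
  have hAx : A.mulVec x = g - Pi.single j r := by
    funext k
    have hsum : A.mulVec x k
        = A k j * x j + ∑ i, A k (j.succAbove i) * x (j.succAbove i) := by
      simp [Matrix.mulVec, dotProduct, Fin.sum_univ_succAbove _ j]
    rw [hsum]
    simp only [hx, Fin.insertNth_apply_same, Fin.insertNth_apply_succAbove, mul_zero, zero_add]
    rcases eq_or_ne k j with rfl | hk
    · simp [hr, Pi.single_apply]
    · have hex : ∃ i', j.succAbove i' = k := Fin.exists_succAbove_eq hk
      obtain ⟨i', rfl⟩ := hex
      have := congrFun hαj i'
      simp only [Matrix.mulVec, dotProduct, Matrix.submatrix_apply] at this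
      simp [Pi.single_apply, hk, this]
  have hx2 : x = A⁻¹.mulVec (g - Pi.single j r) := by
    rw [← hAx, Matrix.mulVec_mulVec, Matrix.nonsing_inv_mul A hA, Matrix.one_mulVec]
  have hxj : x j = 0 := by simp [hx]
  have key : (0 : ℝ) = α j - A⁻¹ j j * r := by
    have h := congrFun hx2 j
    rw [hxj] at h
    rw [h, hα]
    simp [Matrix.mulVec, dotProduct, mul_sub, Finset.sum_sub_distrib, Pi.single_apply,
      mul_ite, Finset.sum_ite_eq']
  rw [eq_div_iff hdiag]
  linarith
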